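/- arXiv:1801.00618 — 4 statements merged into one kernel-verified Lean document; each statement's English description precedes it below -/
import Mathlib

section
/- Let A, P, Q be real m×m matrices with P, Q symmetric positive definite, AᵀP + PA = −Q, and let γ₁, γ₂ > 0 satisfy (γ₁ + γ₂)P ⪯ Q (Loewner order). Let η : ℝ → ℝᵐ be differentiable with η′(t) = A η(t) + w(t), and set V(t) = η(t)ᵀPη(t). Then for every t such that |η(t)| ≥ (2 λmax(P) / (γ₂ λmin(P))) · |w(t)|, one has V′(t) ≤ −γ₁ V(t), where λmin(P), λmax(P) denote the smallest and largest eigenvalues of P. -/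
/-!
Along a trajectory, the Lyapunov equation turns the derivative of `V = ηᵀPη` into
`-ηᵀQη + 2 ηᵀPw`. The hypothesis `(γ₁ + γ₂)P ⪯ Q` bounds the first term by `-(γ₁ + γ₂)V`, so it
suffices that the cross term satisfies `2 ηᵀPw ≤ γ₂ V`. Cauchy–Schwarz for the form of `P` and the
Rayleigh bound `xᵀPx ≤ λmax(P) |x|²` give `ηᵀPw ≤ λmax(P) |η| |w|`, and in the region
`2 λmax(P) |w| ≤ γ₂ λmin(P) |η|` this is at most `γ₂ λmin(P) |η|² / 2 ≤ γ₂ V / 2`.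
-/

open Matrix

/-- The Euclidean norm of a vector in `Fin n → ℝ`. -/
noncomputable def euclideanNorm {n : ℕ} (x : Fin n → ℝ) : ℝ :=
  Real.sqrt (x ⬝ᵥ x)

section Calculus

variable {𝕜 : Type*} [NontriviallyNormedField 𝕜] {n : Type*} [Fintype n]
  {f g : 𝕜 → n → 𝕜} {f' g' : n → 𝕜} {t : 𝕜}

theorem HasDerivAt.dotProduct (hf : HasDerivAt f f' t) (hg : HasDerivAt g g' t) :
    HasDerivAt (fun s ↦ f s ⬝ᵥ g s) (f' ⬝ᵥ g t + f t ⬝ᵥ g') t :=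
  (HasDerivAt.fun_sum fun i _ ↦ (hasDerivAt_pi.1 hf i).fun_mul (hasDerivAt_pi.1 hg i)).congr_deriv
    Finset.sum_add_distrib

theorem HasDerivAt.mulVec (M : Matrix n n 𝕜) (hf : HasDerivAt f f' t) :
    HasDerivAt (fun s ↦ M *ᵥ f s) (M *ᵥ f') t :=
  hasDerivAt_pi.2 fun i ↦ ((hasDerivAt_const t (M i)).dotProduct hf).congr_deriv <| by
    rw [zero_dotProduct, zero_add]; rfl

end Calculus

theorem hasDerivAt_dotProduct_mulVec_of_lyapunov {n : Type*} [Fintype n] {A P Q : Matrix n n ℝ}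
    (hP : P.IsSymm) (hLyap : Aᵀ * P + P * A = -Q) {η : ℝ → n → ℝ} {w : n → ℝ} {t : ℝ}
    (hη : HasDerivAt η (A *ᵥ η t + w) t) :
    HasDerivAt (fun s ↦ η s ⬝ᵥ P *ᵥ η s) (-(η t ⬝ᵥ Q *ᵥ η t) + 2 * (η t ⬝ᵥ P *ᵥ w)) t := by
  refine (hη.dotProduct (hη.mulVec P)).congr_deriv ?_
  set x := η t
  have hQ : x ⬝ᵥ Q *ᵥ x = -((A *ᵥ x) ⬝ᵥ P *ᵥ x + x ⬝ᵥ P *ᵥ A *ᵥ x) := by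
    rw [← neg_neg Q, ← hLyap, neg_mulVec, dotProduct_neg, add_mulVec, dotProduct_add,
      ← mulVec_mulVec, ← mulVec_mulVec, dotProduct_mulVec x Aᵀ, vecMul_transpose]
  have hw : w ⬝ᵥ P *ᵥ x = x ⬝ᵥ P *ᵥ w := by
    rw [dotProduct_comm, dotProduct_mulVec, ← mulVec_transpose, hP.eq]
  rw [add_dotProduct, mulVec_add, dotProduct_add, hQ, hw]
  ring

namespace Matrix

open scoped MatrixOrder

variable {n : Type*} [Fintype n] {A : Matrix n n ℝ}

theorem PosSemidef.dotProduct_mulVec_sq_le (hA : A.PosSemidef) (x y : n → ℝ) :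
    (x ⬝ᵥ A *ᵥ y) ^ 2 ≤ (x ⬝ᵥ A *ᵥ x) * (y ⬝ᵥ A *ᵥ y) := by
  let := A.toSeminormedAddCommGroup hA
  let := A.toInnerProductSpace hA
  have h : ((A *ᵥ y) ⬝ᵥ x) * ((A *ᵥ y) ⬝ᵥ x) ≤ ((A *ᵥ x) ⬝ᵥ x) * ((A *ᵥ y) ⬝ᵥ y) :=
    real_inner_mul_inner_self_le x y
  simpa only [sq, dotProduct_comm (A *ᵥ _)] using h

variable [DecidableEq n]

theorem IsHermitian.mul_dotProduct_self_le_dotProduct_mulVec (hA : A.IsHermitian) {r : ℝ}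
    (hr : ∀ i, r ≤ hA.eigenvalues i) (x : n → ℝ) : r * (x ⬝ᵥ x) ≤ x ⬝ᵥ A *ᵥ x := by
  have h : algebraMap ℝ (Matrix n n ℝ) r ≤ A := by
    rw [algebraMap_le_iff_le_spectrum hA.isSelfAdjoint, hA.spectrum_real_eq_range_eigenvalues]
    exact Set.forall_mem_range.2 hr
  simpa [sub_mulVec, Algebra.algebraMap_eq_smul_one, smul_mulVec] using
    (le_iff.mp h).dotProduct_mulVec_nonneg x

theorem IsHermitian.dotProduct_mulVec_le_mul_dotProduct_self (hA : A.IsHermitian) {r : ℝ}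
    (hr : ∀ i, hA.eigenvalues i ≤ r) (x : n → ℝ) : x ⬝ᵥ A *ᵥ x ≤ r * (x ⬝ᵥ x) := by
  have h : A ≤ algebraMap ℝ (Matrix n n ℝ) r := by
    rw [le_algebraMap_iff_spectrum_le hA.isSelfAdjoint, hA.spectrum_real_eq_range_eigenvalues]
    exact Set.forall_mem_range.2 hr
  simpa [sub_mulVec, Algebra.algebraMap_eq_smul_one, smul_mulVec] using
    (le_iff.mp h).dotProduct_mulVec_nonneg x

theorem PosSemidef.dotProduct_mulVec_le_iSup_eigenvalues_mul (hA : A.PosSemidef) (x y : n → ℝ) :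
    x ⬝ᵥ A *ᵥ y ≤ (⨆ i, hA.1.eigenvalues i) * (√(x ⬝ᵥ x) * √(y ⬝ᵥ y)) := by
  set b := ⨆ i, hA.1.eigenvalues i
  have hb : 0 ≤ b := Real.iSup_nonneg hA.eigenvalues_nonneg
  have hle : ∀ i, hA.1.eigenvalues i ≤ b := le_ciSup (Set.finite_range _).bddAbove
  have hx : 0 ≤ x ⬝ᵥ x := by simpa using dotProduct_self_star_nonneg x
  have hy : 0 ≤ y ⬝ᵥ y := by simpa using dotProduct_self_star_nonneg y
  refine (le_abs_self _).trans (abs_le_of_sq_le_sq ?_ (by positivity))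
  calc (x ⬝ᵥ A *ᵥ y) ^ 2 ≤ (x ⬝ᵥ A *ᵥ x) * (y ⬝ᵥ A *ᵥ y) := hA.dotProduct_mulVec_sq_le x y
    _ ≤ (b * (x ⬝ᵥ x)) * (b * (y ⬝ᵥ y)) :=
      mul_le_mul (hA.1.dotProduct_mulVec_le_mul_dotProduct_self hle x)
        (hA.1.dotProduct_mulVec_le_mul_dotProduct_self hle y) (hA.dotProduct_mulVec_nonneg y)
        (by positivity)
    _ = (b * (√(x ⬝ᵥ x) * √(y ⬝ᵥ y))) ^ 2 := by
      rw [mul_pow, mul_pow, Real.sq_sqrt hx, Real.sq_sqrt hy]; ring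

theorem PosSemidef.two_mul_dotProduct_mulVec_le (hA : A.PosSemidef) {γ : ℝ} (hγ : 0 ≤ γ)
    {x u : n → ℝ}
    (h : 2 * (⨆ i, hA.1.eigenvalues i) * √(u ⬝ᵥ u) ≤ γ * (⨅ i, hA.1.eigenvalues i) * √(x ⬝ᵥ x)) :
    2 * (x ⬝ᵥ A *ᵥ u) ≤ γ * (x ⬝ᵥ A *ᵥ x) := by
  set a := ⨅ i, hA.1.eigenvalues i
  have hx : 0 ≤ x ⬝ᵥ x := by simpa using dotProduct_self_star_nonneg x
  have hray : a * √(x ⬝ᵥ x) ^ 2 ≤ x ⬝ᵥ A *ᵥ x := by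
    rw [Real.sq_sqrt hx]
    exact hA.1.mul_dotProduct_self_le_dotProduct_mulVec
      (ciInf_le (Set.finite_range _).bddBelow) x
  calc 2 * (x ⬝ᵥ A *ᵥ u) ≤ √(x ⬝ᵥ x) * (2 * (⨆ i, hA.1.eigenvalues i) * √(u ⬝ᵥ u)) := by
        linarith [hA.dotProduct_mulVec_le_iSup_eigenvalues_mul x u]
    _ ≤ √(x ⬝ᵥ x) * (γ * a * √(x ⬝ᵥ x)) := mul_le_mul_of_nonneg_left h (Real.sqrt_nonneg _)
    _ = γ * (a * √(x ⬝ᵥ x) ^ 2) := by ring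
    _ ≤ γ * (x ⬝ᵥ A *ᵥ x) := mul_le_mul_of_nonneg_left hray hγ

theorem PosDef.iInf_eigenvalues_pos [Nonempty n] (hA : A.PosDef) :
    0 < ⨅ i, hA.1.eigenvalues i := by
  obtain ⟨i, hi⟩ := exists_eq_ciInf_of_finite (f := hA.1.eigenvalues)
  exact hi ▸ hA.eigenvalues_pos i

end Matrix

theorem deriv_lyapunov_le_of_large_state_general (m : ℕ)
    (A P Q : Matrix (Fin m) (Fin m) ℝ)
    (hPsymm : P.IsSymm) (hP : P.PosDef)
    (hLyap : Aᵀ * P + P * A = -Q)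
    (γ₁ γ₂ : ℝ) (hγ₂ : 0 < γ₂)
    (hγ : (Q - (γ₁ + γ₂) • P).PosSemidef)
    (η w : ℝ → Fin m → ℝ)
    (hη : ∀ t, HasDerivAt η (A.mulVec (η t) + w t) t)
    (V : ℝ → ℝ) (hV : V = fun s => η s ⬝ᵥ P.mulVec (η s))
    (t : ℝ)
    (ht : 2 * (⨆ i, hP.1.eigenvalues i) / (γ₂ * ⨅ i, hP.1.eigenvalues i) *
        euclideanNorm (w t) ≤ euclideanNorm (η t)) :
    deriv V t ≤ -γ₁ * V t := by
  set x := η t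
  have hderiv : deriv V t = -(x ⬝ᵥ Q *ᵥ x) + 2 * (x ⬝ᵥ P *ᵥ w t) := by
    rw [hV]; exact (hasDerivAt_dotProduct_mulVec_of_lyapunov hPsymm hLyap (hη t)).deriv
  have hQ : (γ₁ + γ₂) * (x ⬝ᵥ P *ᵥ x) ≤ x ⬝ᵥ Q *ᵥ x := by
    simpa [sub_mulVec, smul_mulVec] using hγ.dotProduct_mulVec_nonneg x
  have hregion : 2 * (⨆ i, hP.1.eigenvalues i) * euclideanNorm (w t) ≤
      γ₂ * (⨅ i, hP.1.eigenvalues i) * euclideanNorm x := by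
    rcases isEmpty_or_nonempty (Fin m) with hm | hm
    · simp [Real.iSup_of_isEmpty, Real.iInf_of_isEmpty]
    · rw [div_mul_eq_mul_div, div_le_iff₀ (mul_pos hγ₂ hP.iInf_eigenvalues_pos)] at ht
      linarith
  have hcross := hP.posSemidef.two_mul_dotProduct_mulVec_le hγ₂.le hregion
  rw [hderiv, hV]
  linarith

/-- Exponential-decrease region condition for the e-ISS Lyapunov function
`V(t) = η(t)ᵀ P η(t)` along the disturbed dynamics `η' = A η + w`:
whenever `|η(t)| ≥ (2 λmax(P) / (γ₂ λmin(P))) |w(t)|`, one has `V'(t) ≤ -γ₁ V(t)`. -/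
theorem deriv_lyapunov_le_of_large_state (m : ℕ)
    (A P Q : Matrix (Fin m) (Fin m) ℝ)
    (hPsymm : P.IsSymm) (hQsymm : Q.IsSymm) (hP : P.PosDef) (hQ : Q.PosDef)
    (hLyap : Aᵀ * P + P * A = -Q)
    (γ₁ γ₂ : ℝ) (hγ₁ : 0 < γ₁) (hγ₂ : 0 < γ₂)
    (hγ : (Q - (γ₁ + γ₂) • P).PosSemidef)
    (η w : ℝ → Fin m → ℝ)
    (hη : ∀ t, HasDerivAt η (A.mulVec (η t) + w t) t)
    (V : ℝ → ℝ) (hV : V = fun s => η s ⬝ᵥ P.mulVec (η s))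
    (t : ℝ)
    (ht : 2 * (⨆ i, hP.1.eigenvalues i) / (γ₂ * ⨅ i, hP.1.eigenvalues i) *
        euclideanNorm (w t) ≤ euclideanNorm (η t)) :
    deriv V t ≤ -γ₁ * V t :=
  deriv_lyapunov_le_of_large_state_general m A P Q hPsymm hP hLyap γ₁ γ₂ hγ₂ hγ η w hη V hV t ht
end

section
/- Let c > 0, r ≥ 0, and let V : [0, ∞) → ℝ be differentiable and nonnegative such that V′(t) ≤ −c V(t) for every t ≥ 0 with V(t) ≥ r. Then V(t) ≤ max(e^{−ct} V(0), r) for all t ≥ 0. -/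
/-!
Fix `t ≥ 0` and let `s` be the last time in `[0, t]` at which `V ≤ r`, or `s = 0` if there is
none. On `(s, t]` the decay condition applies, so `u ↦ e^{cu} V u` is antitone on `[s, t]` and
`V t ≤ e^{-c(t-s)} V s`. This is `e^{-ct} V 0` when `s = 0`, and otherwise at most `V s ≤ r`.
-/

open Set Real

theorem antitoneOn_exp_mul_of_deriv_le_neg_mul {c : ℝ} {V : ℝ → ℝ} {D : Set ℝ} (hD : Convex ℝ D)
    (hcont : ContinuousOn V D) (hdiff : ∀ x ∈ interior D, DifferentiableAt ℝ V x)
    (hV : ∀ x ∈ interior D, deriv V x ≤ -c * V x) :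
    AntitoneOn (fun x ↦ exp (c * x) * V x) D := by
  have hderiv : ∀ x ∈ interior D,
      HasDerivAt (fun x ↦ exp (c * x) * V x) (exp (c * x) * (deriv V x + c * V x)) x := by
    intro x hx
    exact (((hasDerivAt_id' x).const_mul c).exp.fun_mul (hdiff x hx).hasDerivAt).congr_deriv
      (by ring)
  refine antitoneOn_of_deriv_nonpos hD ?_ ?_ ?_
  · exact ((continuous_const.mul continuous_id).rexp.continuousOn).mul hcont
  · exact fun x hx ↦ (hderiv x hx).differentiableAt.differentiableWithinAt
  · intro x hx
    rw [(hderiv x hx).deriv]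
    exact mul_nonpos_of_nonneg_of_nonpos (exp_pos _).le (by linarith [hV x hx])

theorem le_exp_mul_of_deriv_le_neg_mul {c a b : ℝ} {V : ℝ → ℝ} (hab : a ≤ b)
    (hcont : ContinuousOn V (Icc a b)) (hdiff : ∀ x ∈ Ioo a b, DifferentiableAt ℝ V x)
    (hV : ∀ x ∈ Ioo a b, deriv V x ≤ -c * V x) :
    V b ≤ exp (-c * (b - a)) * V a := by
  have hanti := antitoneOn_exp_mul_of_deriv_le_neg_mul (convex_Icc a b) hcont
    (by rwa [interior_Icc]) (by rwa [interior_Icc])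
  have hab' : exp (c * b) * V b ≤ exp (c * a) * V a :=
    hanti (left_mem_Icc.2 hab) (right_mem_Icc.2 hab) hab
  calc V b = exp (-(c * b)) * (exp (c * b) * V b) := by
        rw [← mul_assoc, ← exp_add, neg_add_cancel, exp_zero, one_mul]
    _ ≤ exp (-(c * b)) * (exp (c * a) * V a) := by gcongr
    _ = exp (-c * (b - a)) * V a := by rw [← mul_assoc, ← exp_add]; ring_nf

theorem exists_last_le_or_eq_left {f : ℝ → ℝ} {a b : ℝ} (r : ℝ) (hab : a ≤ b)
    (hf : ContinuousOn f (Icc a b)) :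
    ∃ s ∈ Icc a b, (s = a ∨ f s ≤ r) ∧ ∀ u ∈ Ioc s b, r < f u := by
  set S := insert a (Icc a b ∩ f ⁻¹' Iic r)
  have hS : IsCompact S :=
    (isCompact_Icc.of_isClosed_subset (hf.preimage_isClosed_of_isClosed isClosed_Icc isClosed_Iic)
      inter_subset_left).insert a
  obtain ⟨s, hsS, hmax⟩ := hS.exists_isGreatest (insert_nonempty _ _)
  have hsIcc : s ∈ Icc a b := by
    rcases hsS with rfl | ⟨hs, -⟩
    exacts [left_mem_Icc.2 hab, hs]
  refine ⟨s, hsIcc, hsS.imp id fun h ↦ h.2, fun u hu ↦ lt_of_not_ge fun hfu ↦ ?_⟩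
  exact (hmax (Or.inr ⟨⟨hsIcc.1.trans hu.1.le, hu.2⟩, hfu⟩)).not_gt hu.1

theorem lyapunov_ultimate_bound_general (c r : ℝ) (hc : 0 < c)
    (V : ℝ → ℝ)
    (hdiff : ∀ t, 0 ≤ t → DifferentiableAt ℝ V t)
    (hnonneg : ∀ t, 0 ≤ t → 0 ≤ V t)
    (hV : ∀ t, 0 ≤ t → r ≤ V t → deriv V t ≤ -c * V t) :
    ∀ t, 0 ≤ t → V t ≤ max (Real.exp (-c * t) * V 0) r := by
  intro t ht
  have hcont : ContinuousOn V (Icc 0 t) := fun x hx ↦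
    (hdiff x hx.1).continuousAt.continuousWithinAt
  obtain ⟨s, ⟨hs0, hst⟩, hs, habove⟩ := exists_last_le_or_eq_left r ht hcont
  have hdecay : V t ≤ exp (-c * (t - s)) * V s :=
    le_exp_mul_of_deriv_le_neg_mul hst (hcont.mono (Icc_subset_Icc_left hs0))
      (fun x hx ↦ hdiff x (hs0.trans hx.1.le))
      (fun x hx ↦ hV x (hs0.trans hx.1.le) (habove x (Ioo_subset_Ioc_self hx)).le)
  rcases hs with rfl | hVs
  · exact le_max_of_le_left (by simpa using hdecay)
  · have hexp : exp (-c * (t - s)) ≤ 1 := exp_le_one_iff.2 (by nlinarith)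
    exact le_max_of_le_right <|
      calc V t ≤ exp (-c * (t - s)) * V s := hdecay
        _ ≤ V s := mul_le_of_le_one_left (hnonneg s hs0) hexp
        _ ≤ r := hVs

/-- Region-based e-ISS Lyapunov condition: if a nonnegative differentiable `V`
satisfies `V' ≤ -cV` whenever `V ≥ r`, then `V(t) ≤ max (e^{-ct} V(0)) r`. -/
theorem lyapunov_ultimate_bound (c r : ℝ) (hc : 0 < c) (hr : 0 ≤ r)
    (V : ℝ → ℝ)
    (hdiff : ∀ t, 0 ≤ t → DifferentiableAt ℝ V t)
    (hnonneg : ∀ t, 0 ≤ t → 0 ≤ V t)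
    (hV : ∀ t, 0 ≤ t → r ≤ V t → deriv V t ≤ -c * V t) :
    ∀ t, 0 ≤ t → V t ≤ max (Real.exp (-c * t) * V 0) r :=
  lyapunov_ultimate_bound_general c r hc V hdiff hnonneg hV
end

section
/- Let ϑ : ℝⁿ → ℝⁿ be Lipschitz continuous with ϑ(0) = 0, and suppose there exist N ≥ 1 and ξ ∈ (0, 1) such that |ϑ^i(ζ)| ≤ N ξ^i |ζ| for all ζ ∈ ℝⁿ and all i ≥ 0 (ϑ^i denoting the i-fold iterate). Then there exist a function V : ℝⁿ → ℝ and constants b₁, b₂, b₃, b₄ > 0 such that for all ζ, ζ′ ∈ ℝⁿ: (i) b₁|ζ|² ≤ V(ζ) ≤ b₂|ζ|²; (ii) V(ϑ(ζ)) − V(ζ) ≤ −b₃|ζ|²; (iii) |V(ζ) − V(ζ′)| ≤ b₄ |ζ − ζ′| (|ζ| + |ζ′|). -/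
open scoped NNReal

/-!
Choose `M ≥ 1` with `N ξ^M < 1` and take `V ζ = ∑_{i < M} ‖ϑ^i ζ‖²`, a finite truncation of the
usual series. The `i = 0` term and the uniform bound `‖ϑ^i ζ‖ ≤ N ‖ζ‖` give the quadratic bounds;
`V (ϑ ζ) - V ζ` telescopes to `‖ϑ^M ζ‖² - ‖ζ‖² ≤ ((N ξ^M)² - 1) ‖ζ‖²`; and each term is locally
Lipschitz because `ϑ^i` is `L^i`-Lipschitz and `‖a‖² - ‖b‖² = (‖a‖ - ‖b‖)(‖a‖ + ‖b‖)`.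
-/

open Finset

theorem exists_pos_mul_pow_lt_one {N ξ : ℝ} (hN : 0 < N) (hξ0 : 0 ≤ ξ) (hξ1 : ξ < 1) :
    ∃ M : ℕ, 0 < M ∧ N * ξ ^ M < 1 := by
  obtain ⟨M, hM⟩ := exists_pow_lt_of_lt_one (inv_pos.mpr hN) hξ1
  refine ⟨M + 1, M.succ_pos, ?_⟩
  calc N * ξ ^ (M + 1) ≤ N * ξ ^ M := 
        mul_le_mul_of_nonneg_left (pow_le_pow_of_le_one hξ0 hξ1.le M.le_succ) hN.le
    _ < N * N⁻¹ := by gcongr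
    _ = 1 := mul_inv_cancel₀ hN.ne'

theorem abs_sq_norm_sub_sq_norm_le {E : Type*} [SeminormedAddCommGroup E] (a b : E) :
    |‖a‖ ^ 2 - ‖b‖ ^ 2| ≤ ‖a - b‖ * (‖a‖ + ‖b‖) := by
  rw [sq_sub_sq, abs_mul, abs_of_nonneg (by positivity : 0 ≤ ‖a‖ + ‖b‖), mul_comm]
  gcongr
  exact abs_norm_sub_norm_le a b

section IterateSqNormSum

variable {E : Type*} [SeminormedAddCommGroup E] (f : E → E) (M : ℕ)

def iterateSqNormSum (x : E) : ℝ :=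
  ∑ i ∈ range M, ‖f^[i] x‖ ^ 2

variable {f M}

theorem sq_norm_le_iterateSqNormSum (hM : 0 < M) (x : E) :
    ‖x‖ ^ 2 ≤ iterateSqNormSum f M x :=
  single_le_sum (f := fun i => ‖f^[i] x‖ ^ 2) (fun _ _ => by positivity)
    (mem_range.mpr hM)

theorem iterateSqNormSum_le {C : ℝ} (hC : ∀ i x, ‖f^[i] x‖ ≤ C * ‖x‖) (x : E) :
    iterateSqNormSum f M x ≤ M * C ^ 2 * ‖x‖ ^ 2 := by
  calc iterateSqNormSum f M x ≤ ∑ _i ∈ range M, C ^ 2 * ‖x‖ ^ 2 := by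
        refine sum_le_sum fun i _ => ?_
        rw [← mul_pow]
        exact pow_le_pow_left₀ (norm_nonneg _) (hC i x) 2
    _ = M * C ^ 2 * ‖x‖ ^ 2 := by rw [sum_const, card_range, nsmul_eq_mul, mul_assoc]

theorem iterateSqNormSum_apply_sub (x : E) :
    iterateSqNormSum f M (f x) - iterateSqNormSum f M x = ‖f^[M] x‖ ^ 2 - ‖x‖ ^ 2 := by
  simp only [iterateSqNormSum, ← Function.iterate_succ_apply, ← sum_sub_distrib]
  exact sum_range_sub (fun i => ‖f^[i] x‖ ^ 2) M

theorem iterateSqNormSum_apply_sub_le {c : ℝ} {x : E} (hx : ‖f^[M] x‖ ≤ c * ‖x‖) :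
    iterateSqNormSum f M (f x) - iterateSqNormSum f M x ≤ -(1 - c ^ 2) * ‖x‖ ^ 2 := by
  have hsq : ‖f^[M] x‖ ^ 2 ≤ c ^ 2 * ‖x‖ ^ 2 := by
    rw [← mul_pow]; exact pow_le_pow_left₀ (norm_nonneg _) hx 2
  rw [iterateSqNormSum_apply_sub]
  linarith

theorem abs_iterateSqNormSum_sub_le {K : ℝ≥0} (hf : LipschitzWith K f) {C : ℝ}
    (hC : ∀ i x, ‖f^[i] x‖ ≤ C * ‖x‖) (x y : E) :
    |iterateSqNormSum f M x - iterateSqNormSum f M y|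
      ≤ C * (∑ i ∈ range M, (K : ℝ) ^ i) * ‖x - y‖ * (‖x‖ + ‖y‖) := by
  have hterm : ∀ i, |‖f^[i] x‖ ^ 2 - ‖f^[i] y‖ ^ 2|
      ≤ (K : ℝ) ^ i * ‖x - y‖ * (C * (‖x‖ + ‖y‖)) := fun i => by
    have hdist : ‖f^[i] x - f^[i] y‖ ≤ (K : ℝ) ^ i * ‖x - y‖ := by
      simpa [dist_eq_norm] using (hf.iterate i).dist_le_mul x y
    have hsum : ‖f^[i] x‖ + ‖f^[i] y‖ ≤ C * (‖x‖ + ‖y‖) := by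
      linarith [hC i x, hC i y]
    calc _ ≤ ‖f^[i] x - f^[i] y‖ * (‖f^[i] x‖ + ‖f^[i] y‖) := abs_sq_norm_sub_sq_norm_le _ _
      _ ≤ _ := by gcongr
  calc |iterateSqNormSum f M x - iterateSqNormSum f M y|
      ≤ ∑ i ∈ range M, |‖f^[i] x‖ ^ 2 - ‖f^[i] y‖ ^ 2| := by
        rw [iterateSqNormSum, iterateSqNormSum, ← sum_sub_distrib]
        exact abs_sum_le_sum_abs _ _
    _ ≤ ∑ i ∈ range M, (K : ℝ) ^ i * ‖x - y‖ * (C * (‖x‖ + ‖y‖)) := sum_le_sum fun i _ => hterm i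
    _ = C * (∑ i ∈ range M, (K : ℝ) ^ i) * ‖x - y‖ * (‖x‖ + ‖y‖) := by
        rw [← sum_mul, ← sum_mul]; ring

end IterateSqNormSum

theorem converse_lyapunov_discrete_general (n : ℕ)
    (ϑ : EuclideanSpace ℝ (Fin n) → EuclideanSpace ℝ (Fin n))
    (L : ℝ≥0) (hLip : LipschitzWith L ϑ)
    (N ξ : ℝ) (hN : 1 ≤ N) (hξ0 : 0 < ξ) (hξ1 : ξ < 1)
    (hstab : ∀ (ζ : EuclideanSpace ℝ (Fin n)) (i : ℕ), ‖ϑ^[i] ζ‖ ≤ N * ξ ^ i * ‖ζ‖) :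
    ∃ (V : EuclideanSpace ℝ (Fin n) → ℝ) (b₁ b₂ b₃ b₄ : ℝ),
      0 < b₁ ∧ 0 < b₂ ∧ 0 < b₃ ∧ 0 < b₄ ∧
      ∀ ζ ζ' : EuclideanSpace ℝ (Fin n),
        (b₁ * ‖ζ‖ ^ 2 ≤ V ζ ∧ V ζ ≤ b₂ * ‖ζ‖ ^ 2) ∧
        V (ϑ ζ) - V ζ ≤ -b₃ * ‖ζ‖ ^ 2 ∧
        |V ζ - V ζ'| ≤ b₄ * ‖ζ - ζ'‖ * (‖ζ‖ + ‖ζ'‖) := by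
  have hN0 : 0 < N := one_pos.trans_le hN
  obtain ⟨M, hM0, hMξ⟩ := exists_pos_mul_pow_lt_one hN0 hξ0.le hξ1
  have hbound : ∀ i ζ, ‖ϑ^[i] ζ‖ ≤ N * ‖ζ‖ := fun i ζ =>
    (hstab ζ i).trans <| by
      gcongr; exact mul_le_of_le_one_right hN0.le (pow_le_one₀ hξ0.le hξ1.le)
  have hc : 0 ≤ N * ξ ^ M := by positivity
  refine ⟨iterateSqNormSum ϑ M, 1, M * N ^ 2, 1 - (N * ξ ^ M) ^ 2,
    N * ∑ i ∈ range M, (L : ℝ) ^ i, one_pos, by positivity, by nlinarith,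
    mul_pos hN0 (geom_sum_pos L.coe_nonneg hM0.ne'), fun ζ ζ' => ⟨⟨?_, ?_⟩, ?_, ?_⟩⟩
  · rw [one_mul]; exact sq_norm_le_iterateSqNormSum hM0 ζ
  · exact iterateSqNormSum_le hbound ζ
  · exact iterateSqNormSum_apply_sub_le (by simpa [mul_assoc] using hstab ζ M)
  · exact abs_iterateSqNormSum_sub_le hLip hbound ζ ζ'

/-- Discrete-time converse Lyapunov theorem for an exponentially stable fixed point of a
Lipschitz map `ϑ` (the restricted Poincaré map of the partial hybrid zero dynamics):
exponential stability of the iteration yields a Lyapunov function with quadratic bounds,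
quadratic decrease, and a local Lipschitz-type estimate. -/
theorem converse_lyapunov_discrete (n : ℕ)
    (ϑ : EuclideanSpace ℝ (Fin n) → EuclideanSpace ℝ (Fin n))
    (L : ℝ≥0) (hLip : LipschitzWith L ϑ) (h0 : ϑ 0 = 0)
    (N ξ : ℝ) (hN : 1 ≤ N) (hξ0 : 0 < ξ) (hξ1 : ξ < 1)
    (hstab : ∀ (ζ : EuclideanSpace ℝ (Fin n)) (i : ℕ), ‖ϑ^[i] ζ‖ ≤ N * ξ ^ i * ‖ζ‖) :
    ∃ (V : EuclideanSpace ℝ (Fin n) → ℝ) (b₁ b₂ b₃ b₄ : ℝ),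
      0 < b₁ ∧ 0 < b₂ ∧ 0 < b₃ ∧ 0 < b₄ ∧
      ∀ ζ ζ' : EuclideanSpace ℝ (Fin n),
        (b₁ * ‖ζ‖ ^ 2 ≤ V ζ ∧ V ζ ≤ b₂ * ‖ζ‖ ^ 2) ∧
        V (ϑ ζ) - V ζ ≤ -b₃ * ‖ζ‖ ^ 2 ∧
        |V ζ - V ζ'| ≤ b₄ * ‖ζ - ζ'‖ * (‖ζ‖ + ‖ζ'‖) :=
  converse_lyapunov_discrete_general n ϑ L hLip N ξ hN hξ0 hξ1 hstab
end

section
/- Let K_p, K_d be real symmetric n×n matrices, c_c, c̄_d, κ_q > 0, and let q, q_d : ℝ → ℝⁿ be twice differentiable with |q_d′(t)| ≤ κ_q and |q_d″(t)| ≤ κ_q for all t. Set e := q − q_d. Let D : ℝ → M_n(ℝ) be differentiable with D(t) symmetric and ‖D(t)‖ ≤ c̄_d, let C : ℝ → M_n(ℝ) satisfy ‖C(t)‖ ≤ c_c |q′(t)|, and let G : ℝ → ℝⁿ satisfy |G(t)| ≤ c_c. Assume the closed-loop dynamics D(t) q″(t) + C(t) q′(t) + G(t) = −K_p e(t) − K_d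 e′(t) and the passivity identity e′(t)ᵀ D′(t) e′(t) = 2 e′(t)ᵀ C(t) e′(t) hold for all t. Then V₀(t) := ½ e(t)ᵀK_p e(t) + ½ e′(t)ᵀ D(t) e′(t) satisfies, for all t: V₀′(t) ≤ −e′(t)ᵀ K_d e′(t) + c_c κ_q |e′(t)|² + (c_c κ_q² + c_c + c̄_d κ_q) |e′(t)|. -/
/-!
By the product rule and the symmetry of `K_p` and `D`, `V₀' = eᵀK_p ė + ėᵀD ë + ½ ėᵀḊ ė`.
Pairing the closed-loop dynamics with `ė`, writing `q̇ = ė + q̇_d`, `q̈ = ë + q̈_d` and using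
passivity `½ ėᵀḊ ė = ėᵀC ė`, everything cancels except
`−ėᵀK_d ė − ėᵀC q̇_d − ėᵀG − ėᵀD q̈_d`. The last three terms are bounded by Cauchy–Schwarz,
the quadratic term in `|ė|` coming from `‖C‖ ≤ c_c |q̇| ≤ c_c (|ė| + κ_q)`.
-/

open Matrix
open scoped Matrix.Norms.L2Operator

section EuclideanNorm

variable {n : ℕ}

theorem euclideanNorm_eq_norm_toLp (x : Fin n → ℝ) :
    euclideanNorm x = ‖WithLp.toLp 2 x‖ := by
  rw [norm_eq_sqrt_real_inner, EuclideanSpace.inner_toLp_toLp]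
  rfl

theorem euclideanNorm_nonneg (x : Fin n → ℝ) : 0 ≤ euclideanNorm x :=
  Real.sqrt_nonneg _

theorem euclideanNorm_add_le (x y : Fin n → ℝ) :
    euclideanNorm (x + y) ≤ euclideanNorm x + euclideanNorm y := by
  simp only [euclideanNorm_eq_norm_toLp, WithLp.toLp_add]
  exact norm_add_le _ _

theorem abs_dotProduct_le (x y : Fin n → ℝ) :
    |x ⬝ᵥ y| ≤ euclideanNorm x * euclideanNorm y := by
  rw [euclideanNorm_eq_norm_toLp, euclideanNorm_eq_norm_toLp, dotProduct_comm]
  exact abs_real_inner_le_norm (WithLp.toLp 2 x) (WithLp.toLp 2 y)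

theorem euclideanNorm_mulVec_le (A : Matrix (Fin n) (Fin n) ℝ) (x : Fin n → ℝ) :
    euclideanNorm (A *ᵥ x) ≤ ‖A‖ * euclideanNorm x := by
  rw [euclideanNorm_eq_norm_toLp, euclideanNorm_eq_norm_toLp]
  exact A.l2_opNorm_mulVec (WithLp.toLp 2 x)

theorem abs_dotProduct_mulVec_le (A : Matrix (Fin n) (Fin n) ℝ) (x y : Fin n → ℝ) :
    |x ⬝ᵥ A *ᵥ y| ≤ euclideanNorm x * (‖A‖ * euclideanNorm y) :=
  (abs_dotProduct_le x _).trans <|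
    mul_le_mul_of_nonneg_left (euclideanNorm_mulVec_le A y) (euclideanNorm_nonneg x)

end EuclideanNorm

theorem Matrix.IsSymm.dotProduct_mulVec_comm {R n : Type*} [CommSemiring R] [Fintype n]
    {A : Matrix n n R} (hA : A.IsSymm) (x y : n → R) :
    x ⬝ᵥ A *ᵥ y = y ⬝ᵥ A *ᵥ x := by
  rw [dotProduct_mulVec, ← mulVec_transpose, hA, dotProduct_comm]

section Derivatives

variable {𝕜 : Type*} [RCLike 𝕜] {m n : Type*} [Fintype m] [Fintype n] {t : 𝕜}

theorem HasDerivAt.dotProduct_s17 {u v : 𝕜 → n → 𝕜} {u' v' : n → 𝕜}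
    (hu : HasDerivAt u u' t) (hv : HasDerivAt v v' t) :
    HasDerivAt (fun s ↦ u s ⬝ᵥ v s) (u t ⬝ᵥ v' + u' ⬝ᵥ v t) t :=
  ContinuousLinearMap.hasDerivAt_of_bilinear
    (B := (dotProductBilin 𝕜 𝕜 : (n → 𝕜) →ₗ[𝕜] _ →ₗ[𝕜] 𝕜).toContinuousBilinearMap)
    (fun _ ↦ hu) (fun _ ↦ hv)

variable [DecidableEq n]

theorem HasDerivAt.matrix_mulVec {A : 𝕜 → Matrix m n 𝕜} {v : 𝕜 → n → 𝕜} {A' : Matrix m n 𝕜}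
    {v' : n → 𝕜} (hA : HasDerivAt A A' t) (hv : HasDerivAt v v' t) :
    HasDerivAt (fun s ↦ A s *ᵥ v s) (A t *ᵥ v' + A' *ᵥ v t) t :=
  ContinuousLinearMap.hasDerivAt_of_bilinear
    (B := (mulVecBilin 𝕜 𝕜 : Matrix m n 𝕜 →ₗ[𝕜] _ →ₗ[𝕜] m → 𝕜).toContinuousBilinearMap)
    (fun _ ↦ hA) (fun _ ↦ hv)

theorem HasDerivAt.dotProduct_mulVec_self {u : 𝕜 → n → 𝕜} {A : 𝕜 → Matrix n n 𝕜} {u' : n → 𝕜}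
    {A' : Matrix n n 𝕜} (hu : HasDerivAt u u' t) (hA : HasDerivAt A A' t) (hsymm : (A t).IsSymm) :
    HasDerivAt (fun s ↦ u s ⬝ᵥ A s *ᵥ u s) (2 * (u t ⬝ᵥ A t *ᵥ u') + u t ⬝ᵥ A' *ᵥ u t) t := by
  convert hu.dotProduct_s17 (hA.matrix_mulVec hu) using 1
  rw [dotProduct_add, hsymm.dotProduct_mulVec_comm u']
  ring

end Derivatives

section ClosedLoop

variable {n : ℕ}

theorem energy_rate_eq_of_closed_loop {Kp Kd D D' C : Matrix (Fin n) (Fin n) ℝ}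
    {e ed edd qdot qddot vd ad G : Fin n → ℝ} (hKp : Kp.IsSymm)
    (hdyn : D *ᵥ qddot + C *ᵥ qdot + G = -(Kp *ᵥ e) - Kd *ᵥ ed)
    (hpassive : ed ⬝ᵥ D' *ᵥ ed = 2 * (ed ⬝ᵥ C *ᵥ ed))
    (hqdot : qdot = ed + vd) (hqddot : qddot = edd + ad) :
    e ⬝ᵥ Kp *ᵥ ed + ed ⬝ᵥ D *ᵥ edd + 1 / 2 * (ed ⬝ᵥ D' *ᵥ ed) =
      -(ed ⬝ᵥ Kd *ᵥ ed) - ed ⬝ᵥ C *ᵥ vd - ed ⬝ᵥ G - ed ⬝ᵥ D *ᵥ ad := by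
  have hpower := congrArg (ed ⬝ᵥ ·) hdyn
  subst hqdot hqddot
  simp only [mulVec_add, dotProduct_add, dotProduct_sub, dotProduct_neg] at hpower
  rw [hKp.dotProduct_mulVec_comm]
  linarith

theorem energy_rate_perturbation_le {C D : Matrix (Fin n) (Fin n) ℝ} {ed vd ad G : Fin n → ℝ}
    {cc cD κ : ℝ} (hC : ‖C‖ ≤ cc * euclideanNorm (ed + vd)) (hG : euclideanNorm G ≤ cc)
    (hD : ‖D‖ ≤ cD) (hvd : euclideanNorm vd ≤ κ) (had : euclideanNorm ad ≤ κ) :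
    -(ed ⬝ᵥ C *ᵥ vd) - ed ⬝ᵥ G - ed ⬝ᵥ D *ᵥ ad ≤
      cc * κ * euclideanNorm ed ^ 2 + (cc * κ ^ 2 + cc + cD * κ) * euclideanNorm ed := by
  set r := euclideanNorm ed
  have hr : 0 ≤ r := euclideanNorm_nonneg ed
  have hκ : 0 ≤ κ := (euclideanNorm_nonneg vd).trans hvd
  have hcc : 0 ≤ cc := (euclideanNorm_nonneg G).trans hG
  have hCvd : ‖C‖ * euclideanNorm vd ≤ cc * (r + κ) * κ := by
    have hqdot : euclideanNorm (ed + vd) ≤ r + κ :=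
      (euclideanNorm_add_le ed vd).trans (by linarith)
    exact mul_le_mul (hC.trans (by gcongr)) hvd (euclideanNorm_nonneg vd) (by positivity)
  have hDad : ‖D‖ * euclideanNorm ad ≤ cD * κ :=
    mul_le_mul hD had (euclideanNorm_nonneg ad) ((norm_nonneg D).trans hD)
  have hCterm := (neg_le_abs _).trans (abs_dotProduct_mulVec_le C ed vd)
  have hGterm := (neg_le_abs _).trans (abs_dotProduct_le ed G)
  have hDterm := (neg_le_abs _).trans (abs_dotProduct_mulVec_le D ed ad)
  linarith [mul_le_mul_of_nonneg_left hCvd hr, mul_le_mul_of_nonneg_left hDad hr,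
    mul_le_mul_of_nonneg_left hG hr]

end ClosedLoop

theorem energy_lyapunov_derivative_bound_general (n : ℕ)
    (Kp Kd : Matrix (Fin n) (Fin n) ℝ) (hKpsymm : Kp.IsSymm)
    (cc cD κq : ℝ)
    (q qd : ℝ → Fin n → ℝ)
    (hq : Differentiable ℝ q) (hq' : Differentiable ℝ (deriv q))
    (hqd : Differentiable ℝ qd) (hqd' : Differentiable ℝ (deriv qd))
    (hqdvel : ∀ t, euclideanNorm (deriv qd t) ≤ κq)
    (hqdacc : ∀ t, euclideanNorm (deriv (deriv qd) t) ≤ κq)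
    (e : ℝ → Fin n → ℝ) (he : e = q - qd)
    (D : ℝ → Matrix (Fin n) (Fin n) ℝ) (hDdiff : Differentiable ℝ D)
    (hDsymm : ∀ t, (D t).IsSymm) (hDnorm : ∀ t, ‖D t‖ ≤ cD)
    (C : ℝ → Matrix (Fin n) (Fin n) ℝ)
    (hCnorm : ∀ t, ‖C t‖ ≤ cc * euclideanNorm (deriv q t))
    (G : ℝ → Fin n → ℝ) (hGnorm : ∀ t, euclideanNorm (G t) ≤ cc)
    (hdyn : ∀ t, (D t).mulVec (deriv (deriv q) t) + (C t).mulVec (deriv q t) + G t =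
        -(Kp.mulVec (e t)) - Kd.mulVec (deriv e t))
    (hpassive : ∀ t, deriv e t ⬝ᵥ (deriv D t).mulVec (deriv e t) =
        2 * (deriv e t ⬝ᵥ (C t).mulVec (deriv e t)))
    (V₀ : ℝ → ℝ)
    (hV₀ : V₀ = fun t => (1 / 2) * (e t ⬝ᵥ Kp.mulVec (e t)) +
        (1 / 2) * (deriv e t ⬝ᵥ (D t).mulVec (deriv e t))) :
    ∀ t, deriv V₀ t ≤ -(deriv e t ⬝ᵥ Kd.mulVec (deriv e t)) +
        cc * κq * euclideanNorm (deriv e t) ^ 2 +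
        (cc * κq ^ 2 + cc + cD * κq) * euclideanNorm (deriv e t) := by
  intro t
  have hde : deriv e = deriv q - deriv qd := by
    funext s
    rw [he]
    exact deriv_sub (hq s) (hqd s)
  have hdde : deriv (deriv e) t = deriv (deriv q) t - deriv (deriv qd) t := by
    rw [hde]
    exact deriv_sub (hq' t) (hqd' t)
  have he_diff : Differentiable ℝ e := he ▸ hq.sub hqd
  have hde_diff : Differentiable ℝ (deriv e) := hde ▸ hq'.sub hqd'
  have hKp_term :=
    (he_diff t).hasDerivAt.dotProduct_mulVec_self (hasDerivAt_const t Kp) hKpsymm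
  have hD_term := (hde_diff t).hasDerivAt.dotProduct_mulVec_self (hDdiff t).hasDerivAt (hDsymm t)
  have hqdot : deriv q t = deriv e t + deriv qd t := by simp [hde]
  have hqddot : deriv (deriv q) t = deriv (deriv e) t + deriv (deriv qd) t := by simp [hdde]
  have hrate := energy_rate_eq_of_closed_loop hKpsymm (hdyn t) (hpassive t) hqdot hqddot
  have hbound := energy_rate_perturbation_le (hqdot ▸ hCnorm t) (hGnorm t) (hDnorm t)
    (hqdvel t) (hqdacc t)
  rw [hV₀]
  refine ((hKp_term.const_mul (1 / 2)).add (hD_term.const_mul (1 / 2))).deriv.trans_le ?_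
  rw [zero_mulVec, dotProduct_zero]
  linarith

/-- Derivative estimate for the energy part `V₀ = ½ eᵀK_p e + ½ ėᵀD ė` of the strict
Lyapunov function for PD tracking control of a robot manipulator:
`V₀′ ≤ −ėᵀK_d ė + c_c κ_q |ė|² + (c_c κ_q² + c_c + c̄_d κ_q)|ė|`. -/
theorem energy_lyapunov_derivative_bound (n : ℕ)
    (Kp Kd : Matrix (Fin n) (Fin n) ℝ) (hKpsymm : Kp.IsSymm) (hKdsymm : Kd.IsSymm)
    (cc cD κq : ℝ) (hcc : 0 < cc) (hcD : 0 < cD) (hκq : 0 < κq)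
    (q qd : ℝ → Fin n → ℝ)
    (hq : Differentiable ℝ q) (hq' : Differentiable ℝ (deriv q))
    (hqd : Differentiable ℝ qd) (hqd' : Differentiable ℝ (deriv qd))
    (hqdvel : ∀ t, euclideanNorm (deriv qd t) ≤ κq)
    (hqdacc : ∀ t, euclideanNorm (deriv (deriv qd) t) ≤ κq)
    (e : ℝ → Fin n → ℝ) (he : e = q - qd)
    (D : ℝ → Matrix (Fin n) (Fin n) ℝ) (hDdiff : Differentiable ℝ D)
    (hDsymm : ∀ t, (D t).IsSymm) (hDnorm : ∀ t, ‖D t‖ ≤ cD)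
    (C : ℝ → Matrix (Fin n) (Fin n) ℝ)
    (hCnorm : ∀ t, ‖C t‖ ≤ cc * euclideanNorm (deriv q t))
    (G : ℝ → Fin n → ℝ) (hGnorm : ∀ t, euclideanNorm (G t) ≤ cc)
    (hdyn : ∀ t, (D t).mulVec (deriv (deriv q) t) + (C t).mulVec (deriv q t) + G t =
        -(Kp.mulVec (e t)) - Kd.mulVec (deriv e t))
    (hpassive : ∀ t, deriv e t ⬝ᵥ (deriv D t).mulVec (deriv e t) =
        2 * (deriv e t ⬝ᵥ (C t).mulVec (deriv e t)))
    (V₀ : ℝ → ℝ)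
    (hV₀ : V₀ = fun t => (1 / 2) * (e t ⬝ᵥ Kp.mulVec (e t)) +
        (1 / 2) * (deriv e t ⬝ᵥ (D t).mulVec (deriv e t))) :
    ∀ t, deriv V₀ t ≤ -(deriv e t ⬝ᵥ Kd.mulVec (deriv e t)) +
        cc * κq * euclideanNorm (deriv e t) ^ 2 +
        (cc * κq ^ 2 + cc + cD * κq) * euclideanNorm (deriv e t) :=
  energy_lyapunov_derivative_bound_general n Kp Kd hKpsymm cc cD κq q qd hq hq' hqd hqd' hqdvel
    hqdacc e he D hDdiff hDsymm hDnorm C hCnorm G hGnorm hdyn hpassive V₀ hV₀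
end
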